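/- arXiv:1012.0826 — 2 statements merged into one kernel-verified Lean document; each statement's English description precedes it below -/
import Mathlib

section
/- Under assumption (GT): for every η₁ > 0, taking B as in (GT), for all integers 0 ≤ m < n and all x ∈ ℝ one has the lower pointwise bound F̄_n^m(x) ≥ Q_m(F̄_n^{m+1}(x + B)) − η₁, where Q_m(u) = ∑_{k≥1} p_{m,k}·(1 − (1−u)^k). -/
/-!
Write `f = F̄_n^{m+1}` and `u = f (x + B)`. On the event that every displacement satisfies
`y i ≥ -B`, monotonicity of `f` gives `1 - f (x - y i) ≤ 1 - u`, so the product in the recursion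
is at most `(1 - u) ^ k`; the complementary event has `G_{m,k}`-mass at most `η₁` and the product
is at most `1` there. Hence the `k`-th integral is at most `(1 - u) ^ k + η₁`, and averaging
against `p_{m,·}` (a probability vector) turns `F̄_n^m x = 1 - ∑ p_{m,k} ∫ …` into the bound.
-/

open MeasureTheory Set Filter

section Integral

variable {α : Type*} [MeasurableSpace α] {μ : Measure α} [IsProbabilityMeasure μ]

lemma integrable_of_mem_Icc {h : α → ℝ} (hm : Measurable h) (h01 : ∀ y, h y ∈ Icc 0 1) :
    Integrable h μ :=
  .of_bound hm.aestronglyMeasurable 1 <| ae_of_all _ fun y => by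
    rw [Real.norm_of_nonneg (h01 y).1]; exact (h01 y).2

lemma integral_mem_Icc_of_mem_Icc {h : α → ℝ} (hm : Measurable h) (h01 : ∀ y, h y ∈ Icc 0 1) :
    ∫ y, h y ∂μ ∈ Icc 0 1 := by
  refine ⟨integral_nonneg fun y => (h01 y).1, ?_⟩
  calc ∫ y, h y ∂μ ≤ ∫ _, (1 : ℝ) ∂μ :=
        integral_mono (integrable_of_mem_Icc hm h01) (integrable_const 1) fun y => (h01 y).2
    _ = 1 := by simp

lemma integral_le_add_measureReal_compl {h : α → ℝ} {A : Set α} {c : ℝ}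
    (hA : MeasurableSet A) (hh : Integrable h μ) (hc : 0 ≤ c)
    (h_le_c : ∀ y ∈ A, h y ≤ c) (h_le_one : ∀ y, h y ≤ 1) :
    ∫ y, h y ∂μ ≤ c + μ.real Aᶜ := by
  have hind : Integrable (Aᶜ.indicator (1 : α → ℝ)) μ := (integrable_const 1).indicator hA.compl
  have hbound : ∀ y, h y ≤ c + Aᶜ.indicator (1 : α → ℝ) y := by
    intro y
    by_cases hy : y ∈ A
    · simpa [hy] using h_le_c y hy
    · simpa [hy] using (h_le_one y).trans (le_add_of_nonneg_left hc)
  calc ∫ y, h y ∂μ ≤ ∫ y, (c + Aᶜ.indicator (1 : α → ℝ) y) ∂μ :=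
        integral_mono hh ((integrable_const c).add hind) hbound
    _ = c + μ.real Aᶜ := by
        rw [integral_add (integrable_const c) hind, integral_indicator_one hA.compl]
        simp

end Integral

section Product

variable {f : ℝ → ℝ}

lemma prod_one_sub_mem_Icc (hf01 : ∀ z, f z ∈ Icc 0 1) {ι : Type*} [Fintype ι] (x : ℝ)
    (y : ι → ℝ) :
    ∏ i, (1 - f (x - y i)) ∈ Icc 0 1 :=
  unitInterval.prod_mem fun i _ => Icc.mem_iff_one_sub_mem.mp (hf01 (x - y i))

lemma prod_one_sub_le_pow (hf : Antitone f) (hf01 : ∀ z, f z ∈ Icc 0 1) {ι : Type*} [Fintype ι]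
    {x B : ℝ} {y : ι → ℝ} (hy : ∀ i, -B ≤ y i) :
    ∏ i, (1 - f (x - y i)) ≤ (1 - f (x + B)) ^ Fintype.card ι := by
  rw [← Finset.card_univ, ← Finset.prod_const]
  refine Finset.prod_le_prod (fun i _ => (Icc.mem_iff_one_sub_mem.mp (hf01 _)).1) fun i _ => ?_
  linarith [hf (show x - y i ≤ x + B by linarith [hy i])]

lemma integral_prod_one_sub_le (hf : Antitone f) (hf01 : ∀ z, f z ∈ Icc 0 1) {k : ℕ}
    (μ : Measure (Fin k → ℝ)) [IsProbabilityMeasure μ] (x B : ℝ) :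
    ∫ y, ∏ i, (1 - f (x - y i)) ∂μ ≤ (1 - f (x + B)) ^ k + (1 - μ.real {y | ∀ i, -B ≤ y i}) := by
  have hA : MeasurableSet {y : Fin k → ℝ | ∀ i, -B ≤ y i} := by measurability
  have hm : Measurable fun y : Fin k → ℝ => ∏ i, (1 - f (x - y i)) := by
    have := hf.measurable
    fun_prop
  have h01 : ∀ y : Fin k → ℝ, _ := prod_one_sub_mem_Icc hf01 x
  rw [← probReal_compl_eq_one_sub hA]
  refine integral_le_add_measureReal_compl hA (integrable_of_mem_Icc hm h01)
    (pow_nonneg (Icc.mem_iff_one_sub_mem.mp (hf01 (x + B))).1 k) (fun y hy => ?_) fun y => (h01 y).2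
  simpa using prod_one_sub_le_pow hf hf01 hy

end Product

section Series

variable {p : ℕ → ℝ}

lemma summable_mul_of_mem_Icc (hp : ∀ k, 0 ≤ p k) (hps : Summable p) {a : ℕ → ℝ}
    (ha : ∀ k, a k ∈ Icc 0 1) : Summable fun k => p k * a k :=
  .of_nonneg_of_le (fun k => mul_nonneg (hp k) (ha k).1)
    (fun k => mul_le_of_le_one_right (hp k) (ha k).2) hps

lemma tsum_mul_one_sub (hp1 : HasSum p 1) {a : ℕ → ℝ} (hpa : Summable fun k => p k * a k) :
    ∑' k, p k * (1 - a k) = 1 - ∑' k, p k * a k := by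
  simp only [mul_one_sub]
  rw [hp1.summable.tsum_sub hpa, hp1.tsum_eq]

lemma tsum_mul_le_tsum_mul_add (hp : ∀ k, 0 ≤ p k) (hp1 : HasSum p 1) {a b : ℕ → ℝ}
    (ha : ∀ k, a k ∈ Icc 0 1) (hb : ∀ k, b k ∈ Icc 0 1) {η : ℝ}
    (hab : ∀ k, p k ≠ 0 → a k ≤ b k + η) :
    ∑' k, p k * a k ≤ ∑' k, p k * b k + η := by
  have hsum : HasSum (fun k => p k * (b k + η)) (∑' k, p k * b k + η) := by
    simpa only [mul_add, one_mul] using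
      (summable_mul_of_mem_Icc hp hp1.summable hb).hasSum.add (hp1.mul_right η)
  refine hasSum_le (fun k => ?_) (summable_mul_of_mem_Icc hp hp1.summable ha).hasSum hsum
  rcases eq_or_ne (p k) 0 with hk | hk
  · simp [hk]
  · exact mul_le_mul_of_nonneg_left (hab k hk) (hp k)

end Series

theorem stmt_6_general
    (p : ℕ → ℕ → ℝ)
    (G : (n : ℕ) → (k : ℕ) → Measure (Fin k → ℝ))
    (hpnonneg : ∀ n k, 0 ≤ p n k)
    (hpsum : ∀ n, HasSum (p n) 1)
    (hGprob : ∀ n k, IsProbabilityMeasure (G n k))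
    (F : ℕ → ℕ → ℝ → ℝ)
    (hF01 : ∀ n m, m ≤ n → ∀ x, F n m x ∈ Icc (0 : ℝ) 1)
    (hFanti : ∀ n m, m ≤ n → Antitone (F n m))
    (hrec : ∀ n m, m < n → ∀ x : ℝ,
      F n m x = 1 - ∑' k : ℕ, p m k *
        ∫ y : Fin k → ℝ, (∏ i, (1 - F n (m + 1) (x - y i))) ∂(G m k))
    -- `B` as provided by assumption (GT) for the given `η₁`
    (η₁ : ℝ) (B : ℝ)
    (hGT : ∀ n k, p n k ≠ 0 →
      1 - η₁ ≤ ((G n k) {y | ∀ i, y i ≤ B}).toReal ∧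
      1 - η₁ ≤ ((G n k) {y | ∀ i, -B ≤ y i}).toReal)
    (n m : ℕ) (hmn : m < n) (x : ℝ) :
    (∑' k : ℕ, p m k * (1 - (1 - F n (m + 1) (x + B)) ^ k)) - η₁ ≤ F n m x := by
  have := hGprob m
  have hf01 := hF01 n (m + 1) hmn
  have hf := hFanti n (m + 1) hmn
  have hu := Icc.mem_iff_one_sub_mem.mp (hf01 (x + B))
  have hpow : ∀ k : ℕ, (1 - F n (m + 1) (x + B)) ^ k ∈ Icc 0 1 := fun k =>
    ⟨pow_nonneg hu.1 k, pow_le_one₀ hu.1 hu.2⟩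
  have hint : ∀ k, ∫ y, ∏ i, (1 - F n (m + 1) (x - y i)) ∂G m k ∈ Icc 0 1 := fun k =>
    integral_mem_Icc_of_mem_Icc (by have := hf.measurable; fun_prop)
      (prod_one_sub_mem_Icc hf01 x)
  have hint_le : ∀ k, p m k ≠ 0 →
      ∫ y, ∏ i, (1 - F n (m + 1) (x - y i)) ∂G m k ≤ (1 - F n (m + 1) (x + B)) ^ k + η₁ :=
    fun k hk => (integral_prod_one_sub_le hf hf01 (G m k) x B).trans <| by
      linarith [measureReal_def (G m k) {y | ∀ i, -B ≤ y i}, (hGT m k hk).2]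
  rw [hrec n m hmn x, tsum_mul_one_sub (hpsum m)
    (summable_mul_of_mem_Icc (hpnonneg m) (hpsum m).summable hpow)]
  linarith [tsum_mul_le_tsum_mul_add (hpnonneg m) (hpsum m) hint hpow hint_le]

/-- Under assumption (GT): for every `η₁ > 0`, taking `B` as in (GT),
for all `0 ≤ m < n` and all `x` one has the lower pointwise bound
`F̄_n^m(x) ≥ Q_m(F̄_n^{m+1}(x + B)) − η₁`, where
`Q_m(u) = ∑_{k≥1} p_{m,k}·(1 − (1−u)^k)`. -/
theorem stmt_6
    (p : ℕ → ℕ → ℝ)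
    (G : (n : ℕ) → (k : ℕ) → Measure (Fin k → ℝ))
    (g : ℕ → ℕ → Measure ℝ)
    (hp0 : ∀ n, p n 0 = 0)
    (hpnonneg : ∀ n k, 0 ≤ p n k)
    (hpsum : ∀ n, HasSum (p n) 1)
    (hpmean : ∀ n, Summable (fun k : ℕ => (k : ℝ) * p n k))
    (hGprob : ∀ n k, IsProbabilityMeasure (G n k))
    (hgprob : ∀ n k, IsProbabilityMeasure (g n k))
    (hmarg : ∀ n k (i : Fin k), (G n k).map (fun y => y i) = g n k)
    (F : ℕ → ℕ → ℝ → ℝ)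
    (hF01 : ∀ n m, m ≤ n → ∀ x, F n m x ∈ Icc (0 : ℝ) 1)
    (hFanti : ∀ n m, m ≤ n → Antitone (F n m))
    (hFrc : ∀ n m, m ≤ n → ∀ x, ContinuousWithinAt (F n m) (Ici x) x)
    (hFn1 : ∀ n (x : ℝ), x < 0 → F n n x = 1)
    (hFn0 : ∀ n (x : ℝ), 0 ≤ x → F n n x = 0)
    (hrec : ∀ n m, m < n → ∀ x : ℝ,
      F n m x = 1 - ∑' k : ℕ, p m k *
        ∫ y : Fin k → ℝ, (∏ i, (1 - F n (m + 1) (x - y i))) ∂(G m k))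
    -- `B` as provided by assumption (GT) for the given `η₁`
    (η₁ : ℝ) (hη₁ : 0 < η₁) (B : ℝ) (hB : 0 < B)
    (hGT : ∀ n k, p n k ≠ 0 →
      1 - η₁ ≤ ((G n k) {y | ∀ i, y i ≤ B}).toReal ∧
      1 - η₁ ≤ ((G n k) {y | ∀ i, -B ≤ y i}).toReal)
    (n m : ℕ) (hmn : m < n) (x : ℝ) :
    (∑' k : ℕ, p m k * (1 - (1 - F n (m + 1) (x + B)) ^ k)) - η₁ ≤ F n m x :=
  stmt_6_general p G hpnonneg hpsum hGprob F hF01 hFanti hrec η₁ B hGT n m hmn x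
end

section
/- Let k₀ ≥ 1 be an integer, ε₀ ∈ (0,1), p_1,…,p_{k₀} ≥ 0 with ∑_{k=1}^{k₀} p_k = 1, and let g_1,…,g_{k₀} be Borel probability measures on ℝ with g_k((0,∞)) ≥ 1 − ε₀ for each k. Let u, v : ℝ → [0,1] with u nonincreasing, and suppose that ∑_{k=1}^{k₀} p_k·∫_ℝ Q_{1,k}(u(x − y)) dg_k(y) ≤ v(x) for all x ∈ ℝ, where Q_{1,k}(u) = 1 − (1−u)^k. Then for all x ∈ ℝ: ∑_{k=1}^{k₀} p_k·Q_{1,k}(u(x)) ≤ v(x)/(1 − ε₀); in particular u(x) ≤ v(x)/(1 − ε₀). -/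
open MeasureTheory Set

/-!
Monotonicity of `u` gives `u (x - y) ≥ u x` for `y > 0`, so the integrand
`Q_{1,k}(u (x - y))` is at least `Q_{1,k}(u x)` on the half-line `(0, ∞)`, which carries
mass at least `1 - ε₀` under every `g_k`. Hence `(1 - ε₀) ∑ p_k Q_{1,k}(u x) ≤ v x`.
The bound on `u x` follows from `u ≤ Q_{1,k}(u)` for `k ≥ 1` and `∑ p_k = 1`.
-/

lemma measureReal_Ioi_mul_le_integral_comp_sub {ν : Measure ℝ} [IsFiniteMeasure ν]
    {F : ℝ → ℝ} (hF : Antitone F) (hF0 : ∀ x, 0 ≤ F x) {C : ℝ} (hFC : ∀ x, F x ≤ C) (x : ℝ) :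
    F x * ν.real (Ioi 0) ≤ ∫ y, F (x - y) ∂ν := by
  have hmeas : Measurable fun y => F (x - y) :=
    hF.measurable.comp (measurable_const.sub measurable_id)
  have hint : Integrable (fun y => F (x - y)) ν :=
    .of_bound hmeas.aestronglyMeasurable C
      (ae_of_all _ fun y => by rw [Real.norm_of_nonneg (hF0 _)]; exact hFC _)
  calc F x * ν.real (Ioi 0)
      ≤ ∫ y in Ioi 0, F (x - y) ∂ν :=
        setIntegral_ge_of_const_le_real measurableSet_Ioi (measure_ne_top _ _)
          (fun y hy => hF (by linarith [mem_Ioi.1 hy])) hint.integrableOn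
    _ ≤ ∫ y, F (x - y) ∂ν := setIntegral_le_integral hint (ae_of_all _ fun y => hF0 _)

lemma one_sub_one_sub_pow_nonneg {t : ℝ} (ht : t ∈ Icc (0 : ℝ) 1) (k : ℕ) :
    0 ≤ 1 - (1 - t) ^ k :=
  sub_nonneg.2 (pow_le_one₀ (by linarith [ht.2]) (by linarith [ht.1]))

lemma one_sub_one_sub_pow_le_one {t : ℝ} (ht : t ∈ Icc (0 : ℝ) 1) (k : ℕ) :
    1 - (1 - t) ^ k ≤ 1 :=
  sub_le_self _ (pow_nonneg (by linarith [ht.2]) k)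

lemma le_one_sub_one_sub_pow {t : ℝ} (ht : t ∈ Icc (0 : ℝ) 1) {k : ℕ} (hk : 1 ≤ k) :
    t ≤ 1 - (1 - t) ^ k := by
  have : (1 - t) ^ k ≤ (1 - t) ^ 1 :=
    pow_le_pow_of_le_one (by linarith [ht.2]) (by linarith [ht.1]) hk
  linarith [pow_one (1 - t)]

lemma Antitone.one_sub_one_sub_pow {u : ℝ → ℝ} (hu : Antitone u) (hu1 : ∀ x, u x ≤ 1) (k : ℕ) :
    Antitone fun x => 1 - (1 - u x) ^ k := by
  intro a b hab
  have := sub_nonneg.2 (hu1 a)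
  have := hu hab
  dsimp only
  gcongr

lemma le_sum_mul_one_sub_one_sub_pow {s : Finset ℕ} {p : ℕ → ℝ} (hs : ∀ k ∈ s, 1 ≤ k)
    (hp : ∀ k ∈ s, 0 ≤ p k) (hpsum : ∑ k ∈ s, p k = 1) {t : ℝ} (ht : t ∈ Icc (0 : ℝ) 1) :
    t ≤ ∑ k ∈ s, p k * (1 - (1 - t) ^ k) :=
  calc t = ∑ k ∈ s, p k * t := by rw [← Finset.sum_mul, hpsum, one_mul]
    _ ≤ ∑ k ∈ s, p k * (1 - (1 - t) ^ k) := Finset.sum_le_sum fun k hk =>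
        mul_le_mul_of_nonneg_left (le_one_sub_one_sub_pow ht (hs k hk)) (hp k hk)

theorem stmt_18_general
    (k₀ : ℕ)
    (ε₀ : ℝ) (hε₀ : ε₀ ∈ Ioo (0 : ℝ) 1)
    (p : ℕ → ℝ) (hp : ∀ k ∈ Finset.Icc 1 k₀, 0 ≤ p k)
    (hpsum : ∑ k ∈ Finset.Icc 1 k₀, p k = 1)
    (g : ℕ → Measure ℝ) (hg : ∀ k, IsProbabilityMeasure (g k))
    (hgtail : ∀ k ∈ Finset.Icc 1 k₀, 1 - ε₀ ≤ ((g k) (Ioi (0 : ℝ))).toReal)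
    (u v : ℝ → ℝ)
    (hu01 : ∀ x, u x ∈ Icc (0 : ℝ) 1)
    (huanti : Antitone u)
    (hlb : ∀ x : ℝ,
      ∑ k ∈ Finset.Icc 1 k₀, p k * ∫ y : ℝ, (1 - (1 - u (x - y)) ^ k) ∂(g k) ≤ v x) :
    ∀ x : ℝ,
      (∑ k ∈ Finset.Icc 1 k₀, p k * (1 - (1 - u x) ^ k)) ≤ v x / (1 - ε₀) ∧
      u x ≤ v x / (1 - ε₀) := by
  intro x
  have hterm : ∀ k ∈ Finset.Icc 1 k₀,
      (1 - ε₀) * (1 - (1 - u x) ^ k) ≤ ∫ y, (1 - (1 - u (x - y)) ^ k) ∂(g k) := fun k hk =>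
    calc (1 - ε₀) * (1 - (1 - u x) ^ k)
        ≤ (1 - (1 - u x) ^ k) * (g k).real (Ioi 0) := by
          rw [mul_comm]
          exact mul_le_mul_of_nonneg_left (hgtail k hk) (one_sub_one_sub_pow_nonneg (hu01 x) k)
      _ ≤ _ := measureReal_Ioi_mul_le_integral_comp_sub (huanti.one_sub_one_sub_pow
          (fun y => (hu01 y).2) k) (fun y => one_sub_one_sub_pow_nonneg (hu01 y) k)
          (fun y => one_sub_one_sub_pow_le_one (hu01 y) k) x
  have hmix : (1 - ε₀) * ∑ k ∈ Finset.Icc 1 k₀, p k * (1 - (1 - u x) ^ k) ≤ v x :=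
    calc (1 - ε₀) * ∑ k ∈ Finset.Icc 1 k₀, p k * (1 - (1 - u x) ^ k)
        = ∑ k ∈ Finset.Icc 1 k₀, p k * ((1 - ε₀) * (1 - (1 - u x) ^ k)) := by
          rw [Finset.mul_sum]; exact Finset.sum_congr rfl fun _ _ => by ring
      _ ≤ _ := Finset.sum_le_sum fun k hk => mul_le_mul_of_nonneg_left (hterm k hk) (hp k hk)
      _ ≤ v x := hlb x
  have hQ : ∑ k ∈ Finset.Icc 1 k₀, p k * (1 - (1 - u x) ^ k) ≤ v x / (1 - ε₀) := by
    rw [le_div_iff₀ (sub_pos.2 hε₀.2)]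
    linarith
  exact ⟨hQ, (le_sum_mul_one_sub_one_sub_pow (fun k hk => (Finset.mem_Icc.1 hk).1) hp hpsum
    (hu01 x)).trans hQ⟩

/-- Let `k₀ ≥ 1`, `ε₀ ∈ (0,1)`, `p_1,…,p_{k₀} ≥ 0` with `∑ p_k = 1`, and
let `g_1,…,g_{k₀}` be Borel probability measures on `ℝ` with `g_k((0,∞)) ≥ 1 − ε₀`.
Let `u, v : ℝ → [0,1]` with `u` nonincreasing satisfy
`∑_k p_k·∫ Q_{1,k}(u(x−y)) dg_k(y) ≤ v(x)` for all `x`, where `Q_{1,k}(u) = 1 − (1−u)^k`.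
Then for all `x`: `∑_k p_k·Q_{1,k}(u(x)) ≤ v(x)/(1−ε₀)`; in particular
`u(x) ≤ v(x)/(1−ε₀)`. -/
theorem stmt_18
    (k₀ : ℕ) (hk₀ : 1 ≤ k₀)
    (ε₀ : ℝ) (hε₀ : ε₀ ∈ Ioo (0 : ℝ) 1)
    (p : ℕ → ℝ) (hp : ∀ k ∈ Finset.Icc 1 k₀, 0 ≤ p k)
    (hpsum : ∑ k ∈ Finset.Icc 1 k₀, p k = 1)
    (g : ℕ → Measure ℝ) (hg : ∀ k, IsProbabilityMeasure (g k))
    (hgtail : ∀ k ∈ Finset.Icc 1 k₀, 1 - ε₀ ≤ ((g k) (Ioi (0 : ℝ))).toReal)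
    (u v : ℝ → ℝ)
    (hu01 : ∀ x, u x ∈ Icc (0 : ℝ) 1) (hv01 : ∀ x, v x ∈ Icc (0 : ℝ) 1)
    (huanti : Antitone u)
    (hlb : ∀ x : ℝ,
      ∑ k ∈ Finset.Icc 1 k₀, p k * ∫ y : ℝ, (1 - (1 - u (x - y)) ^ k) ∂(g k) ≤ v x) :
    ∀ x : ℝ,
      (∑ k ∈ Finset.Icc 1 k₀, p k * (1 - (1 - u x) ^ k)) ≤ v x / (1 - ε₀) ∧
      u x ≤ v x / (1 - ε₀) :=
  stmt_18_general k₀ ε₀ hε₀ p hp hpsum g hg hgtail u v hu01 huanti hlb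
end
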